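/- arXiv:1604.01584 — 6 statements merged into one kernel-verified Lean document; each statement's English description precedes it below -/
import Mathlib

section
/- Let b>0, σ>0 satisfy σ² ≤ 2b, let T>0, x₀>0, and let n be a positive integer with n > 2T. Let ε₁,…,εₙ be any signs, ε_k ∈ {−1, +1}. Define x₀⁽ⁿ⁾ = x₀ and recursively x_k⁽ⁿ⁾ = x_{k−1}⁽ⁿ⁾ + (b − x_{k−1}⁽ⁿ⁾)T/n + σ ε_k √(T/n) √(x_{k−1}⁽ⁿ⁾) for 1 ≤ k ≤ n. Then x_k⁽ⁿ⁾ > 0 for all 0 ≤ k ≤ n. -/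
/-- Positivity of the Euler scheme for the CIR process driven by
arbitrary signs `ε_k ∈ {−1, +1}`: with `x₀ > 0`, `σ² ≤ 2b`, `n > 2T`, the recursion
`x_k = x_{k−1} + (b − x_{k−1})T/n + σ ε_k √(T/n) √(x_{k−1})` stays positive. -/
theorem cir_euler_scheme_positive (b σ T x₀ : ℝ) (n : ℕ)
    (hb : 0 < b) (hσ : 0 < σ) (hσ2 : σ ^ 2 ≤ 2 * b)
    (hT : 0 < T) (hx₀ : 0 < x₀) (hn : 0 < n) (hnT : 2 * T < (n : ℝ))
    (ε : ℕ → ℝ) (hε : ∀ k, 1 ≤ k → k ≤ n → ε k = 1 ∨ ε k = -1)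
    (x : ℕ → ℝ) (hx0 : x 0 = x₀)
    (hrec : ∀ k, 1 ≤ k → k ≤ n →
      x k = x (k - 1) + (b - x (k - 1)) * T / n
        + σ * ε k * Real.sqrt (T / n) * Real.sqrt (x (k - 1))) :
    ∀ k ≤ n, 0 < x k := by
  have hnpos : (0 : ℝ) < n := Nat.cast_pos.mpr hn
  have hh : 0 < T / n := div_pos hT hnpos
  have hh2 : T / n < 1 / 2 := by
    rw [div_lt_div_iff₀ hnpos (by norm_num)]
    linarith
  intro k
  induction k with
  | zero => intro _; rw [hx0]; exact hx₀
  | succ k ih =>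
    intro hkn
    have hkn' : k ≤ n := Nat.le_of_succ_le hkn
    have hxk : 0 < x k := ih hkn'
    have hrk := hrec (k + 1) (Nat.succ_le_succ (Nat.zero_le _)) hkn
    simp only [Nat.add_sub_cancel] at hrk
    set y := Real.sqrt (x k) with hy
    have hy2 : y ^ 2 = x k := Real.sq_sqrt hxk.le
    have hypos : 0 < y := Real.sqrt_pos.mpr hxk
    set s := Real.sqrt (T / n) with hs
    have hs2 : s ^ 2 = T / n := Real.sq_sqrt hh.le
    have hε2 : (ε (k + 1)) ^ 2 = 1 := by
      rcases hε (k + 1) (Nat.succ_le_succ (Nat.zero_le _)) hkn with h | h <;>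
        rw [h] <;> norm_num
    rw [hrk, ← hy2]
    have hx' : x k + (b - x k) * T / n = y ^ 2 + (b - y ^ 2) * (T / n) := by
      rw [hy2]; ring
    -- x_{k+1} = (1 - h) y² + (σ ε s) y + b h with B² = σ² h < 4 (1-h) b h
    have hB2 : (σ * ε (k + 1) * s) ^ 2 = σ ^ 2 * (T / n) := by
      rw [mul_pow, mul_pow, hε2, hs2]; ring
    have hdisc : (σ * ε (k + 1) * s) ^ 2 < 4 * (1 - T / n) * (b * (T / n)) := by
      rw [hB2]
      have h1 : 2 * b < 4 * (1 - T / n) * b := by nlinarith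
      have h2 : σ ^ 2 < 4 * (1 - T / n) * b := lt_of_le_of_lt hσ2 h1
      have := mul_lt_mul_of_pos_right h2 hh
      linarith [this]
    have hA : 0 < 1 - T / n := by linarith
    have key : y ^ 2 + (b - y ^ 2) * T / n + σ * ε (k + 1) * s * y
        = (1 - T / n) * y ^ 2 + (σ * ε (k + 1) * s) * y + b * (T / n) := by
      field_simp
      ring
    rw [key]
    nlinarith [sq_nonneg (2 * (1 - T / n) * y + σ * ε (k + 1) * s),
      mul_pos hA (pow_pos hypos 2), hdisc, hA]
end

section
/- Let b>0, σ>0 satisfy σ² ≤ 2b, let T>0, x₀>0, C>0, and let n be a positive integer with n > 2T. Let ε₁,…,εₙ be any signs, ε_k ∈ {−1, +1}. Define y₀ = x₀ and recursively y_k = y_{k−1} + (b − min(y_{k−1}, C))T/n + σ ε_k √(T/n) √(min(y_{k−1}, C)) for 1 ≤ k ≤ n. Then y_k > 0 for all 0 ≤ k ≤ n. -/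
/-- Positivity of the Euler scheme for the truncated CIR process driven by
arbitrary signs `ε_k ∈ {−1, +1}`: with `x₀ > 0`, `C > 0`, `σ² ≤ 2b`, `n > 2T`, the recursion
`y_k = y_{k−1} + (b − min(y_{k−1},C))T/n + σ ε_k √(T/n) √(min(y_{k−1},C))` stays positive. -/
theorem truncated_cir_euler_scheme_positive (b σ T x₀ C : ℝ) (n : ℕ)
    (hb : 0 < b) (hσ : 0 < σ) (hσ2 : σ ^ 2 ≤ 2 * b)
    (hT : 0 < T) (hx₀ : 0 < x₀) (hC : 0 < C) (hn : 0 < n) (hnT : 2 * T < (n : ℝ))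
    (ε : ℕ → ℝ) (hε : ∀ k, 1 ≤ k → k ≤ n → ε k = 1 ∨ ε k = -1)
    (y : ℕ → ℝ) (hy0 : y 0 = x₀)
    (hrec : ∀ k, 1 ≤ k → k ≤ n →
      y k = y (k - 1) + (b - min (y (k - 1)) C) * T / n
        + σ * ε k * Real.sqrt (T / n) * Real.sqrt (min (y (k - 1)) C)) :
    ∀ k ≤ n, 0 < y k := by
  intro k hk
  induction k with
  | zero => rw [hy0]; exact hx₀
  | succ k ih =>
    have hk' : k ≤ n := Nat.le_of_succ_le hk
    have hyk : 0 < y k := ih hk'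
    have hrec' := hrec (k + 1) (Nat.le_add_left 1 k) hk
    simp only [Nat.add_sub_cancel] at hrec'
    set m := min (y k) C with hm
    have hm0 : 0 < m := lt_min hyk hC
    have hmy : m ≤ y k := min_le_left _ _
    set s := Real.sqrt m with hsdef
    have hs0 : 0 ≤ s := Real.sqrt_nonneg _
    have hs2 : s ^ 2 = m := Real.sq_sqrt hm0.le
    have hn0 : (0 : ℝ) < n := by exact_mod_cast hn
    set h := T / (n : ℝ) with hhdef
    have hh0 : 0 < h := div_pos hT hn0
    have hh2 : 2 * h < 1 := by
      have : 2 * h = 2 * T / (n : ℝ) := by rw [hhdef]; ring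
      rw [this, div_lt_one hn0]; exact hnT
    set r := Real.sqrt h with hrdef
    have hr0 : 0 ≤ r := Real.sqrt_nonneg _
    have hr2 : r ^ 2 = h := Real.sq_sqrt hh0.le
    have hεk := hε (k + 1) (Nat.le_add_left 1 k) hk
    have hσrs : 0 ≤ σ * r * s := by positivity
    have hεbd : -(σ * r * s) ≤ σ * ε (k + 1) * r * s := by
      rcases hεk with h1 | h1 <;> rw [h1] <;> nlinarith
    have hdiv : (b - m) * T / ↑n = (b - m) * h := by
      rw [hhdef]; ring
    have h1h : (0 : ℝ) < 1 - h := by linarith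
    have hσ2h : σ ^ 2 * h ≤ 2 * b * h := mul_le_mul_of_nonneg_right hσ2 hh0.le
    have h12h : (0 : ℝ) < 1 - 2 * h := by linarith
    have hbh : 0 < 2 * b * h * (1 - 2 * h) := by positivity
    have e : 4 * (1 - h) * ((1 - h) * s ^ 2 + b * h - σ * r * s)
        = (2 * (1 - h) * s - σ * r) ^ 2 + (4 * b * (1 - h) - σ ^ 2) * h := by
      linear_combination (-(σ ^ 2)) * hr2
    have key : 0 < (1 - h) * s ^ 2 + b * h - σ * r * s := by
      nlinarith [e, sq_nonneg (2 * (1 - h) * s - σ * r), hσ2h, hbh, h1h, hh0]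
    have hms : (1 - h) * s ^ 2 = m - m * h := by rw [hs2]; ring
    have key' : 0 < m - m * h + b * h - σ * r * s := by rw [← hms]; exact key
    rw [hrec', hdiv]
    linarith [key', hεbd, hmy]
end

section
/- Let b>0, σ>0 satisfy σ² ≤ 2b, let T>0, x₀>0, and let n be a positive integer with n > 2T. On a probability space let q₁,…,qₙ be i.i.d. random variables with P(q_k = √(T/n)) = P(q_k = −√(T/n)) = 1/2, and define the additive scheme X₀⁽ⁿ⁾ = x₀, X_k⁽ⁿ⁾ = X_{k−1}⁽ⁿ⁾ + (b − X_{k−1}⁽ⁿ⁾)T/n + σ q_k √(X_{k−1}⁽ⁿ⁾). Set γ = max( x₀, (2/3)(σ² + 2b + √(σ⁴ + 4bσ² + 8b²)) ). Then for all 0 ≤ k ≤ n, E[(X_k⁽ⁿ⁾)²] ≤ γ² and E[X_k⁽ⁿ⁾] ≤ γ; in particular this bound is uniform in n and k. -/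
/-!
Write `α = T / n`. The one-step map `x ↦ x + (b - x) α + σ q √x` with `q² = α` is, as a
quadratic in `√x`, of negative discriminant `α (σ² - 4 (1 - α) b)`, so the scheme stays
nonnegative. As `q_{k+1}` is centred with `q_{k+1}² = α` and independent of `X_k`, the moments
`m = E X_k`, `v = E X_k²` follow the exact recursions `m' = (1 - α) m + b α` and
`v' = (1 - α)² v + (2 b α (1 - α) + σ² α) m + b² α²`. Every `γ ≥ 4 (σ² + 2b) / 3`, in particular
the stated one, satisfies `b ≤ γ` and `3 γ² ≥ 2 (b + σ²) γ + b²`, which makes `m ≤ γ`, `v ≤ γ²`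
invariant under these recursions.
-/

open MeasureTheory ProbabilityTheory

noncomputable def cirStep (b σ α x y : ℝ) : ℝ := x + (b - x) * α + σ * y * √x

lemma continuous_cirStep (b σ α : ℝ) : Continuous fun p : ℝ × ℝ => cirStep b σ α p.1 p.2 := by
  unfold cirStep; fun_prop

lemma cirStep_pos {b σ α x y : ℝ} (hα₀ : 0 < α) (hα₁ : α < 1) (hσ : σ ^ 2 < 4 * (1 - α) * b)
    (hy : y ^ 2 = α) (hx : 0 ≤ x) : 0 < cirStep b σ α x y := by
  have hsq : √x ^ 2 = x := Real.sq_sqrt hx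
  have hsquare : 4 * (1 - α) * cirStep b σ α x y
      = (2 * (1 - α) * √x + σ * y) ^ 2 + α * (4 * (1 - α) * b - σ ^ 2) := by
    unfold cirStep; linear_combination (4 * (1 - α) ^ 2) * hsq.symm - σ ^ 2 * hy
  have : 0 < α * (4 * (1 - α) * b - σ ^ 2) := mul_pos hα₀ (by linarith)
  nlinarith [sq_nonneg (2 * (1 - α) * √x + σ * y)]

lemma cirStep_le {b σ α x y : ℝ} (hα₀ : 0 ≤ α) (hα₁ : α ≤ 1) (hy : y ^ 2 = α) (hx : 0 ≤ x) :
    cirStep b σ α x y ≤ 2 * x + |b| + σ ^ 2 := by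
  have hsq : √x ^ 2 = x := Real.sq_sqrt hx
  unfold cirStep
  nlinarith [sq_nonneg (σ * y - √x), le_abs_self b, neg_abs_le b, mul_nonneg hα₀ hx, abs_nonneg b]

lemma four_thirds_le_two_thirds_add_sqrt (b σ : ℝ) :
    4 / 3 * (σ ^ 2 + 2 * b) ≤ 2 / 3 * (σ ^ 2 + 2 * b + √(σ ^ 4 + 4 * b * σ ^ 2 + 8 * b ^ 2)) := by
  have : σ ^ 2 + 2 * b ≤ √(σ ^ 4 + 4 * b * σ ^ 2 + 8 * b ^ 2) :=
    Real.le_sqrt_of_sq_le (by nlinarith)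
  linarith

lemma cir_moment_recursion_le {b σ α γ m v : ℝ} (hb : 0 ≤ b) (hα₀ : 0 ≤ α) (hα : α ≤ 1 / 2)
    (hγ : 4 / 3 * (σ ^ 2 + 2 * b) ≤ γ) (hm : m ≤ γ) (hv : v ≤ γ ^ 2) :
    (1 - α) * m + b * α ≤ γ ∧
      (1 - α) ^ 2 * v + (2 * b * α * (1 - α) + σ ^ 2 * α) * m + (b * α) ^ 2 ≤ γ ^ 2 := by
  have hbγ : b ≤ γ := by nlinarith [sq_nonneg σ]
  have hquad : b ^ 2 + 2 * (b + σ ^ 2) * γ ≤ 3 * γ ^ 2 := by nlinarith [sq_nonneg σ]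
  refine ⟨by nlinarith, ?_⟩
  have hcoef : 0 ≤ 2 * b * α * (1 - α) + σ ^ 2 * α := by
    have : 0 ≤ 1 - α := by linarith
    positivity
  -- the slack is `α ((1/2 - α) (γ - b)² + (3γ² - 2 (b + σ²) γ - b²) / 2)`
  nlinarith [mul_le_mul_of_nonneg_left hv (sq_nonneg (1 - α)), mul_le_mul_of_nonneg_left hm hcoef,
    mul_nonneg (mul_nonneg hα₀ (sub_nonneg.2 hα)) (sq_nonneg (γ - b)),
    mul_nonneg hα₀ (sub_nonneg.2 hquad)]

lemma measurable_iSup_comap_of_recursion {Ω β γ : Type*} [MeasurableSpace β]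
    [mγ : MeasurableSpace γ] {N : ℕ} {ξ : ℕ → Ω → γ} {X : ℕ → Ω → β} {F : β → γ → β} {x₀ : β}
    (hF : Measurable (Function.uncurry F)) (hX0 : ∀ ω, X 0 ω = x₀)
    (hX : ∀ k < N, ∀ ω, X (k + 1) ω = F (X k ω) (ξ (k + 1) ω)) :
    ∀ k ≤ N, Measurable[⨆ j ∈ {j : Fin N | (j : ℕ) < k}, mγ.comap (ξ (j + 1))] (X k) := by
  intro k
  induction k with
  | zero =>
    intro _
    rw [show X 0 = fun _ => x₀ from funext hX0]
    exact measurable_const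
  | succ k ih =>
    intro hk
    rw [show X (k + 1) = fun ω => F (X k ω) (ξ (k + 1) ω) from funext (hX k hk)]
    refine hF.comp (Measurable.prodMk ?_ ?_)
    · refine (ih (by omega)).mono (biSup_mono fun j (hj : (j : ℕ) < k) => ?_) le_rfl
      exact (show (j : ℕ) < k + 1 by omega)
    · refine (comap_measurable (ξ (k + 1))).mono ?_ le_rfl
      exact le_iSup₂_of_le (⟨k, hk⟩ : Fin N) (show k < k + 1 by omega) le_rfl

section Probability

variable {Ω : Type*} [MeasurableSpace Ω] {μ : Measure Ω}

lemma Continuous.integrable_comp_of_ae_mem [IsFiniteMeasure μ] {E F : Type*} [TopologicalSpace E]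
    [NormedAddCommGroup F] {f : E → F} {g : Ω → E} {K : Set E} (hf : Continuous f)
    (hK : IsCompact K) (hg : AEStronglyMeasurable g μ) (hgK : ∀ᵐ ω ∂μ, g ω ∈ K) :
    Integrable (fun ω => f (g ω)) μ := by
  obtain ⟨C, hC⟩ := hK.exists_bound_of_continuousOn hf.continuousOn
  exact .of_bound (hf.comp_aestronglyMeasurable hg) C (hgK.mono fun ω h => hC _ h)

lemma ProbabilityTheory.iIndepFun.indepFun_of_measurable_iSup {ι β γ : Type*}
    [mβ : MeasurableSpace β] [MeasurableSpace γ] {ξ : ι → Ω → β} {i : ι} {S : Set ι} {Y : Ω → γ}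
    (h : iIndepFun ξ μ) (hξ : ∀ j, Measurable (ξ j)) (hi : i ∉ S)
    (hY : Measurable[⨆ j ∈ S, mβ.comap (ξ j)] Y) : IndepFun (ξ i) Y μ := by
  rw [IndepFun_iff_Indep]
  have := indep_iSup_of_disjoint (fun j => (hξ j).comap_le) ((iIndepFun_iff_iIndep _ _ _).1 h)
    (Set.disjoint_singleton_left.2 hi)
  refine indep_of_indep_of_le this ?_ hY.comap_le
  exact le_iSup₂_of_le i (Set.mem_singleton i) le_rfl

variable [IsProbabilityMeasure μ]

lemma ae_eq_or_eq_neg_of_measure_eq_half {ξ : Ω → ℝ} {s : ℝ}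
    (hs : s ≠ 0) (hξ : Measurable ξ) (h₁ : μ {ω | ξ ω = s} = 1 / 2)
    (h₂ : μ {ω | ξ ω = -s} = 1 / 2) : ∀ᵐ ω ∂μ, ξ ω = s ∨ ξ ω = -s := by
  have hdisj : Disjoint {ω | ξ ω = s} {ω | ξ ω = -s} :=
    Set.disjoint_left.2 fun ω (h : ξ ω = s) (h' : ξ ω = -s) => hs (by linarith)
  have hU : MeasurableSet ({ω | ξ ω = s} ∪ {ω | ξ ω = -s}) :=
    (hξ (measurableSet_singleton s)).union (hξ (measurableSet_singleton (-s)))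
  refine (ae_iff_measure_eq (p := fun ω => ξ ω = s ∨ ξ ω = -s) hU.nullMeasurableSet).2 ?_
  change μ ({ω | ξ ω = s} ∪ {ω | ξ ω = -s}) = μ Set.univ
  rw [measure_union hdisj (hξ (measurableSet_singleton _)), h₁, h₂, ENNReal.add_halves,
    measure_univ]

lemma integral_eq_zero_of_measure_eq_half {ξ : Ω → ℝ} {s : ℝ}
    (hs : s ≠ 0) (hξ : Measurable ξ) (h₁ : μ {ω | ξ ω = s} = 1 / 2)
    (h₂ : μ {ω | ξ ω = -s} = 1 / 2) : ∫ ω, ξ ω ∂μ = 0 := by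
  have hae := ae_eq_or_eq_neg_of_measure_eq_half hs hξ h₁ h₂
  have hA : MeasurableSet {ω | ξ ω = s} := hξ (measurableSet_singleton s)
  have hint : Integrable ξ μ := .of_bound hξ.aestronglyMeasurable |s| <| by
    filter_upwards [hae] with ω h
    rcases h with h | h <;> simp [h]
  rw [← integral_add_compl hA hint, setIntegral_congr_fun hA (fun ω h => h),
    setIntegral_congr_ae hA.compl (by filter_upwards [hae] with ω h h' using h.resolve_left h'),
    setIntegral_const, setIntegral_const, measureReal_def, measureReal_def,
    prob_compl_eq_one_sub hA, h₁, one_div, ENNReal.one_sub_inv_two]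
  simp

lemma integral_cirStep (b σ : ℝ) {α M : ℝ} {ξ Y : Ω → ℝ} (hind : IndepFun ξ Y μ)
    (hξ : Measurable ξ) (hY : Measurable Y) (hα : α ≤ 1) (hξ2 : ∀ᵐ ω ∂μ, ξ ω ^ 2 = α)
    (hξ0 : ∫ ω, ξ ω ∂μ = 0) (hYM : ∀ᵐ ω ∂μ, Y ω ∈ Set.Icc 0 M) :
    ∫ ω, cirStep b σ α (Y ω) (ξ ω) ∂μ = (1 - α) * (∫ ω, Y ω ∂μ) + b * α ∧
    ∫ ω, cirStep b σ α (Y ω) (ξ ω) ^ 2 ∂μ = (1 - α) ^ 2 * (∫ ω, Y ω ^ 2 ∂μ)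
        + (2 * b * α * (1 - α) + σ ^ 2 * α) * (∫ ω, Y ω ∂μ) + (b * α) ^ 2 := by
  have hint : ∀ f : ℝ × ℝ → ℝ, Continuous f → Integrable (fun ω => f (Y ω, ξ ω)) μ :=
    fun f hf => hf.integrable_comp_of_ae_mem (isCompact_Icc.prod (isCompact_Icc (a := -1) (b := 1)))
      (hY.prodMk hξ).aestronglyMeasurable <| by
        filter_upwards [hYM, hξ2] with ω hYω hξω
        exact ⟨hYω, abs_le.1 (sq_le_one_iff_abs_le_one _ |>.1 (hξω ▸ hα))⟩
  have hsplit : ∀ (a c d e : ℝ) (g : ℝ → ℝ), Continuous g →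
      ∫ ω, (a * Y ω ^ 2 + c * Y ω + d + e * (ξ ω * g (Y ω))) ∂μ
        = a * (∫ ω, Y ω ^ 2 ∂μ) + c * (∫ ω, Y ω ∂μ) + d := by
    intro a c d e g hg
    have hcross : ∫ ω, ξ ω * g (Y ω) ∂μ = 0 := by
      have := (hind.comp measurable_id hg.measurable).integral_mul_eq_mul_integral
        hξ.aestronglyMeasurable (hg.measurable.comp hY).aestronglyMeasurable
      simpa [hξ0] using this
    have hY2 : Integrable (fun ω => Y ω ^ 2) μ := hint (fun p => p.1 ^ 2) (by fun_prop)
    have hY1 : Integrable Y μ := hint Prod.fst continuous_fst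
    have hξg : Integrable (fun ω => ξ ω * g (Y ω)) μ := hint (fun p => p.2 * g p.1) (by fun_prop)
    have hquad := (hY2.const_mul a).fun_add (hY1.const_mul c)
    rw [integral_add (hquad.fun_add (integrable_const d)) (hξg.const_mul e),
      integral_add hquad (integrable_const d), integral_add (hY2.const_mul a) (hY1.const_mul c),
      integral_const_mul, integral_const_mul, integral_const_mul, hcross, integral_const]
    simp
  constructor
  · calc ∫ ω, cirStep b σ α (Y ω) (ξ ω) ∂μ
        = ∫ ω, (0 * Y ω ^ 2 + (1 - α) * Y ω + b * α + σ * (ξ ω * √(Y ω))) ∂μ := by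
          congr 1; ext ω; unfold cirStep; ring
      _ = _ := by rw [hsplit _ _ _ _ _ Real.continuous_sqrt]; ring
  · calc ∫ ω, cirStep b σ α (Y ω) (ξ ω) ^ 2 ∂μ
        = ∫ ω, ((1 - α) ^ 2 * Y ω ^ 2 + (2 * b * α * (1 - α) + σ ^ 2 * α) * Y ω + (b * α) ^ 2
            + 2 * σ * (ξ ω * ((Y ω + (b - Y ω) * α) * √(Y ω)))) ∂μ := by
          refine integral_congr_ae ?_
          filter_upwards [hYM, hξ2] with ω hYω hξω
          unfold cirStep
          linear_combination σ ^ 2 * √(Y ω) ^ 2 * hξω + σ ^ 2 * α * Real.sq_sqrt hYω.1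
      _ = _ := hsplit _ _ _ _ (fun x => (x + (b - x) * α) * √x) (by fun_prop)

lemma cirStep_moment_le {b σ α γ M : ℝ} {ξ Y : Ω → ℝ} (hα₀ : 0 < α) (hα : α ≤ 1 / 2)
    (hσ : σ ^ 2 < 4 * (1 - α) * b) (hγ : 4 / 3 * (σ ^ 2 + 2 * b) ≤ γ)
    (hind : IndepFun ξ Y μ) (hξ : Measurable ξ) (hY : Measurable Y)
    (hξ2 : ∀ᵐ ω ∂μ, ξ ω ^ 2 = α) (hξ0 : ∫ ω, ξ ω ∂μ = 0) (hYM : ∀ᵐ ω ∂μ, Y ω ∈ Set.Icc 0 M)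
    (hm : ∫ ω, Y ω ∂μ ≤ γ) (hv : ∫ ω, Y ω ^ 2 ∂μ ≤ γ ^ 2) :
    (∀ᵐ ω ∂μ, cirStep b σ α (Y ω) (ξ ω) ∈ Set.Icc 0 (2 * M + |b| + σ ^ 2)) ∧
      ∫ ω, cirStep b σ α (Y ω) (ξ ω) ∂μ ≤ γ ∧ ∫ ω, cirStep b σ α (Y ω) (ξ ω) ^ 2 ∂μ ≤ γ ^ 2 := by
  obtain ⟨hmean, hsq⟩ := integral_cirStep b σ hind hξ hY (by linarith) hξ2 hξ0 hYM
  have hb : 0 ≤ b := by nlinarith [sq_nonneg σ]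
  obtain ⟨hm', hv'⟩ := cir_moment_recursion_le hb hα₀.le hα hγ hm hv
  refine ⟨?_, hmean ▸ hm', hsq ▸ hv'⟩
  filter_upwards [hYM, hξ2] with ω hYω hξω
  exact ⟨(cirStep_pos hα₀ (by linarith) hσ hξω hYω.1).le,
    (cirStep_le hα₀.le (by linarith) hξω hYω.1).trans (by linarith [hYω.2])⟩

theorem cirStep_recursion_moment_le {b σ α γ x₀ : ℝ} {N : ℕ} {ξ X : ℕ → Ω → ℝ}
    (hα₀ : 0 < α) (hα : α ≤ 1 / 2) (hσ : σ ^ 2 < 4 * (1 - α) * b)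
    (hγ : 4 / 3 * (σ ^ 2 + 2 * b) ≤ γ) (hx₀ : 0 ≤ x₀) (hx₀γ : x₀ ≤ γ)
    (hξ : ∀ k, Measurable (ξ k)) (hindep : iIndepFun (fun i : Fin N => ξ (i + 1)) μ)
    (hξ2 : ∀ k < N, ∀ᵐ ω ∂μ, ξ (k + 1) ω ^ 2 = α) (hξ0 : ∀ k < N, ∫ ω, ξ (k + 1) ω ∂μ = 0)
    (hX0 : ∀ ω, X 0 ω = x₀)
    (hX : ∀ k < N, ∀ ω, X (k + 1) ω = cirStep b σ α (X k ω) (ξ (k + 1) ω)) :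
    ∀ k ≤ N, ∫ ω, X k ω ∂μ ≤ γ ∧ ∫ ω, X k ω ^ 2 ∂μ ≤ γ ^ 2 := by
  have hadapted := measurable_iSup_comap_of_recursion (continuous_cirStep b σ α).measurable hX0 hX
  suffices ∀ k ≤ N, (∃ M, ∀ᵐ ω ∂μ, X k ω ∈ Set.Icc 0 M) ∧
      ∫ ω, X k ω ∂μ ≤ γ ∧ ∫ ω, X k ω ^ 2 ∂μ ≤ γ ^ 2 from fun k hk => (this k hk).2
  intro k
  induction k with
  | zero =>
    intro _
    simp only [hX0, integral_const, probReal_univ, one_smul]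
    exact ⟨⟨x₀, .of_forall fun _ => ⟨hx₀, le_rfl⟩⟩, hx₀γ, pow_le_pow_left₀ hx₀ hx₀γ 2⟩
  | succ k ih =>
    intro hk
    obtain ⟨⟨M, hM⟩, hm, hv⟩ := ih (by omega)
    have hXk := hadapted k (by omega)
    have hind : IndepFun (ξ (k + 1)) (X k) μ :=
      hindep.indepFun_of_measurable_iSup (i := ⟨k, hk⟩) (fun _ => hξ _) (by simp) hXk
    replace hXk : Measurable (X k) := hXk.mono (iSup₂_le fun j _ => (hξ _).comap_le) le_rfl
    obtain ⟨hM', hm', hv'⟩ :=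
      cirStep_moment_le hα₀ hα hσ hγ hind (hξ _) hXk (hξ2 k hk) (hξ0 k hk) hM hm hv
    simp only [hX k hk]
    exact ⟨⟨_, hM'⟩, hm', hv'⟩

end Probability

theorem cir_euler_second_moment_bound_general {Ω : Type*} [MeasurableSpace Ω]
    (μ : Measure Ω) [IsProbabilityMeasure μ]
    (b σ T x₀ : ℝ) (n : ℕ)
    (hb : 0 < b) (hσ2 : σ ^ 2 ≤ 2 * b)
    (hT : 0 < T) (hx₀ : 0 < x₀) (hnT : 2 * T < (n : ℝ))
    (q : ℕ → Ω → ℝ) (hmeas : ∀ k, Measurable (q k))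
    (hindep : iIndepFun (fun i : Fin n => q (i + 1)) μ)
    (hdist : ∀ k, 1 ≤ k → k ≤ n →
      μ {ω | q k ω = Real.sqrt (T / n)} = 1 / 2 ∧
        μ {ω | q k ω = -Real.sqrt (T / n)} = 1 / 2)
    (X : ℕ → Ω → ℝ) (hX0 : ∀ ω, X 0 ω = x₀)
    (hXrec : ∀ k, 1 ≤ k → k ≤ n → ∀ ω,
      X k ω = X (k - 1) ω + (b - X (k - 1) ω) * T / n
        + σ * q k ω * Real.sqrt (X (k - 1) ω)) :
    ∀ k ≤ n,
      (∫ ω, (X k ω) ^ 2 ∂μ)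
          ≤ (max x₀ (2 / 3 * (σ ^ 2 + 2 * b + Real.sqrt (σ ^ 4 + 4 * b * σ ^ 2 + 8 * b ^ 2)))) ^ 2 ∧
      (∫ ω, X k ω ∂μ)
          ≤ max x₀ (2 / 3 * (σ ^ 2 + 2 * b + Real.sqrt (σ ^ 4 + 4 * b * σ ^ 2 + 8 * b ^ 2))) := by
  have hn : (0 : ℝ) < n := by linarith
  have hα₀ : 0 < T / n := div_pos hT hn
  have hα : T / n < 1 / 2 := by rw [div_lt_iff₀ hn]; linarith
  have hσ : σ ^ 2 < 4 * (1 - T / n) * b := by nlinarith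
  have hγ := (four_thirds_le_two_thirds_add_sqrt b σ).trans (le_max_right x₀ _)
  have hs : √(T / n) ≠ 0 := (Real.sqrt_pos.2 hα₀).ne'
  have hnoise : ∀ k < n, (∀ᵐ ω ∂μ, q (k + 1) ω ^ 2 = T / n) ∧ ∫ ω, q (k + 1) ω ∂μ = 0 := by
    intro k hk
    obtain ⟨h₁, h₂⟩ := hdist (k + 1) (by omega) hk
    refine ⟨(ae_eq_or_eq_neg_of_measure_eq_half hs (hmeas _) h₁ h₂).mono fun ω h => ?_,
      integral_eq_zero_of_measure_eq_half hs (hmeas _) h₁ h₂⟩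
    rcases h with h | h <;> rw [h] <;> simp only [neg_sq, Real.sq_sqrt hα₀.le]
  have hstep : ∀ k < n, ∀ ω, X (k + 1) ω = cirStep b σ (T / n) (X k ω) (q (k + 1) ω) :=
    fun k hk ω => by rw [hXrec (k + 1) (by omega) hk ω, cirStep, Nat.add_sub_cancel, mul_div_assoc]
  intro k hk
  exact (cirStep_recursion_moment_le hα₀ hα.le hσ hγ hx₀.le (le_max_left _ _) hmeas hindep
    (fun k hk => (hnoise k hk).1) (fun k hk => (hnoise k hk).2) hX0 hstep k hk).symm

/-- Uniform moment bounds for the additive Euler scheme of the CIR process: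
with `γ = max(x₀, (2/3)(σ² + 2b + √(σ⁴ + 4bσ² + 8b²)))`, one has `E[(X_k)²] ≤ γ²` and
`E[X_k] ≤ γ` for all `0 ≤ k ≤ n`, uniformly in `n` and `k`. -/
theorem cir_euler_second_moment_bound {Ω : Type*} [MeasurableSpace Ω]
    (μ : Measure Ω) [IsProbabilityMeasure μ]
    (b σ T x₀ : ℝ) (n : ℕ)
    (hb : 0 < b) (hσ : 0 < σ) (hσ2 : σ ^ 2 ≤ 2 * b)
    (hT : 0 < T) (hx₀ : 0 < x₀) (hn : 0 < n) (hnT : 2 * T < (n : ℝ))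
    (q : ℕ → Ω → ℝ) (hmeas : ∀ k, Measurable (q k))
    (hindep : iIndepFun (fun i : Fin n => q (i + 1)) μ)
    (hdist : ∀ k, 1 ≤ k → k ≤ n →
      μ {ω | q k ω = Real.sqrt (T / n)} = 1 / 2 ∧
        μ {ω | q k ω = -Real.sqrt (T / n)} = 1 / 2)
    (X : ℕ → Ω → ℝ) (hX0 : ∀ ω, X 0 ω = x₀)
    (hXrec : ∀ k, 1 ≤ k → k ≤ n → ∀ ω,
      X k ω = X (k - 1) ω + (b - X (k - 1) ω) * T / n
        + σ * q k ω * Real.sqrt (X (k - 1) ω)) :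
    ∀ k ≤ n,
      (∫ ω, (X k ω) ^ 2 ∂μ)
          ≤ (max x₀ (2 / 3 * (σ ^ 2 + 2 * b + Real.sqrt (σ ^ 4 + 4 * b * σ ^ 2 + 8 * b ^ 2)))) ^ 2 ∧
      (∫ ω, X k ω ∂μ)
          ≤ max x₀ (2 / 3 * (σ ^ 2 + 2 * b + Real.sqrt (σ ^ 4 + 4 * b * σ ^ 2 + 8 * b ^ 2))) :=
  cir_euler_second_moment_bound_general μ b σ T x₀ n hb hσ2 hT hx₀ hnT q hmeas hindep hdist X hX0
    hXrec
end

section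
/- Let b>0, σ>0 satisfy σ² ≤ 2b, let T>0, x₀>0, C>0, and let n be a positive integer with n > 2T. On a probability space let q₁,…,qₙ be i.i.d. random variables with P(q_k = √(T/n)) = P(q_k = −√(T/n)) = 1/2, let F_k = σ(q₁,…,q_k) (F₀ trivial), and define the truncated scheme X₀⁽ⁿ'ᶜ⁾ = x₀, X_k⁽ⁿ'ᶜ⁾ = X_{k−1}⁽ⁿ'ᶜ⁾ + (b − min(X_{k−1}⁽ⁿ'ᶜ⁾,C))T/n + σ q_k √(min(X_{k−1}⁽ⁿ'ᶜ⁾,C)), with increments Q_k⁽ⁿ'ᶜ⁾ = X_k⁽ⁿ'ᶜ⁾ − X_{k−1}⁽ⁿ'ᶜ⁾. Then almost surely Σ_{k=1}^{n} E[(Q_k⁽ⁿ'ᶜ⁾)² | F_{k−1}] ≤ ((b+C)T + σ√(TC))² and Σ_{k=1}^{n} |E[Q_k⁽ⁿ'ᶜ⁾ | F_{k−1}]| ≤ (b+C)T, bounds that are uniform in n. -/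
/-!
Conditionally on `F_{k-1}`, the increment `Q_k` is the `F_{k-1}`-measurable drift
`(b - min(X_{k-1}, C)) T/n` plus `σ √(min(X_{k-1}, C)) q_k`, where `q_k` is centred and
independent of `F_{k-1}`; so `E[Q_k | F_{k-1}]` is the drift, of size at most `(b + C) T/n`
as soon as the scheme stays non-negative. Non-negativity holds on the almost sure event
`q_k = ±√(T/n)`: one step is a quadratic form in `√(min(X, C))` and `√(T/n)` whose discriminant
is `≤ 0` exactly because `σ² ≤ 2b` and `T/n ≤ 1/2`. On that event `|Q_k| ≤ (b + C) T/n +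
σ √(TC/n)`, and `n` times the square of this bound is at most `((b + C) T + σ √(TC))²`.
-/

open MeasureTheory ProbabilityTheory

/-- One step of size `h` of the Euler scheme for `dX = (b - X) dt + σ √X dW`, with `X`
truncated at `C` inside the coefficients and Brownian increment `z`. -/
noncomputable def cirTruncStep (b σ C h x z : ℝ) : ℝ :=
  x + (b - min x C) * h + σ * z * √(min x C)

theorem cirTruncStep_nonneg {b σ C h x z : ℝ} (hσ : 0 ≤ σ) (hσb : σ ^ 2 ≤ 2 * b)
    (hC : 0 ≤ C) (hh : 0 ≤ h) (hh2 : h ≤ 1 / 2) (hx : 0 ≤ x) (hz : -√h ≤ z) :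
    0 ≤ cirTruncStep b σ C h x z := by
  set m := min x C
  have hm : 0 ≤ m := le_min hx hC
  have hs : √m ^ 2 = m := Real.sq_sqrt hm
  have hu : √h ^ 2 = h := Real.sq_sqrt hh
  have hnoise : -(σ * √h * √m) ≤ σ * z * √m := by
    nlinarith [mul_nonneg (mul_nonneg hσ (Real.sqrt_nonneg m)) (neg_le_iff_add_nonneg.mp hz)]
  -- `(1 - h) s² - σ u s + b u²` (`s = √m`, `u = √h`) has discriminant `h (σ² - 4 (1 - h) b) ≤ 0`
  have hquad : 0 ≤ (1 - h) * m - σ * √h * √m + b * h := by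
    refine (mul_nonneg_iff_of_pos_left (c := 4 * (1 - h)) (by linarith)).1 ?_
    have hb : 0 ≤ b := by linarith [sq_nonneg σ]
    have hdisc : σ ^ 2 * h ≤ 4 * (1 - h) * b * h := by
      nlinarith [mul_le_mul_of_nonneg_right hσb hh, mul_nonneg hb hh]
    have hsq : 4 * (1 - h) * ((1 - h) * m - σ * √h * √m + b * h)
        = (2 * (1 - h) * √m - σ * √h) ^ 2 + (4 * (1 - h) * b * h - σ ^ 2 * h) := by
      linear_combination (-4 * (1 - h) ^ 2) * hs - σ ^ 2 * hu
    rw [hsq]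
    exact add_nonneg (sq_nonneg _) (by linarith)
  have hmx : m ≤ x := min_le_left x C
  unfold cirTruncStep
  linarith

theorem abs_sub_min_le {b x C : ℝ} (hb : 0 ≤ b) (hx : 0 ≤ x) (hC : 0 ≤ C) :
    |b - min x C| ≤ b + C :=
  abs_le.mpr ⟨by linarith [min_le_right x C], by linarith [le_min hx hC]⟩

theorem abs_cirTruncStep_sub_le {b σ C h x z : ℝ} (hb : 0 ≤ b) (hσ : 0 ≤ σ) (hC : 0 ≤ C)
    (hh : 0 ≤ h) (hx : 0 ≤ x) (hz : |z| ≤ √h) :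
    |cirTruncStep b σ C h x z - x| ≤ (b + C) * h + σ * √h * √C := by
  have hdrift : |(b - min x C) * h| ≤ (b + C) * h := by
    rw [abs_mul, abs_of_nonneg hh]
    exact mul_le_mul_of_nonneg_right (abs_sub_min_le hb hx hC) hh
  have hnoise : |σ * z * √(min x C)| ≤ σ * √h * √C := by
    rw [abs_mul, abs_mul, abs_of_nonneg hσ, abs_of_nonneg (Real.sqrt_nonneg _)]
    gcongr
    exact min_le_right x C
  calc |cirTruncStep b σ C h x z - x| = |(b - min x C) * h + σ * z * √(min x C)| := by
        rw [cirTruncStep]; ring_nf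
    _ ≤ _ := (abs_add_le _ _).trans (add_le_add hdrift hnoise)

theorem cirTruncStep_iterate_nonneg {b σ C h : ℝ} (hσ : 0 ≤ σ) (hσb : σ ^ 2 ≤ 2 * b)
    (hC : 0 ≤ C) (hh : 0 ≤ h) (hh2 : h ≤ 1 / 2) {n : ℕ} {x z : ℕ → ℝ} (hx₀ : 0 ≤ x 0)
    (hrec : ∀ k, 1 ≤ k → k ≤ n → x k = cirTruncStep b σ C h (x (k - 1)) (z k))
    (hz : ∀ k, 1 ≤ k → k ≤ n → -√h ≤ z k) :
    ∀ k ≤ n, 0 ≤ x k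
  | 0, _ => hx₀
  | k + 1, hk => by
    rw [hrec (k + 1) k.succ_pos hk]
    exact cirTruncStep_nonneg hσ hσb hC hh hh2
      (cirTruncStep_iterate_nonneg hσ hσb hC hh hh2 hx₀ hrec hz k (by omega))
      (hz (k + 1) k.succ_pos hk)

theorem mul_sq_div_add_div_sqrt_le {x A B : ℝ} (hx : 1 ≤ x) (hA : 0 ≤ A) (hB : 0 ≤ B) :
    x * (A / x + B / √x) ^ 2 ≤ (A + B) ^ 2 := by
  have hx0 : 0 < x := by linarith
  have hsx1 : 1 ≤ √x := Real.one_le_sqrt.mpr hx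
  have hrewrite : x * (A / x + B / √x) ^ 2 = (A / √x + B) ^ 2 := by
    field_simp
    linear_combination (A ^ 2 - x * B ^ 2) * Real.sq_sqrt hx0.le
  rw [hrewrite]
  gcongr
  exact div_le_self hA hsx1

theorem measurable_uncurry_cirTruncStep (b σ C h : ℝ) :
    Measurable (Function.uncurry (cirTruncStep b σ C h)) := by
  unfold cirTruncStep Function.uncurry
  fun_prop

section Rademacher

variable {Ω : Type*} {mΩ : MeasurableSpace Ω} {μ : Measure Ω} [IsProbabilityMeasure μ]
  {q : Ω → ℝ} {a : ℝ}

theorem ae_eq_or_eq_neg_of_measure_eq_half_s13 (hq : Measurable q) (ha : a ≠ 0)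
    (h₁ : μ {ω | q ω = a} = 1 / 2) (h₂ : μ {ω | q ω = -a} = 1 / 2) :
    ∀ᵐ ω ∂μ, q ω = a ∨ q ω = -a := by
  have hne : a ≠ -a := fun h => ha (by linarith)
  have hdisj : Disjoint {ω | q ω = a} {ω | q ω = -a} :=
    Set.disjoint_left.mpr fun _ h₁ h₂ => hne (h₁.symm.trans h₂)
  have hS₁ : MeasurableSet {ω | q ω = a} := hq (measurableSet_singleton a)
  have hS₂ : MeasurableSet {ω | q ω = -a} := hq (measurableSet_singleton (-a))
  have hunion : μ ({ω | q ω = a} ∪ {ω | q ω = -a}) = μ Set.univ := by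
    rw [measure_union hdisj hS₂, h₁, h₂, measure_univ, one_div, ENNReal.inv_two_add_inv_two]
  exact (ae_mem_iff_measure_eq (hS₁.union hS₂).nullMeasurableSet).mpr hunion

theorem integral_eq_zero_of_measure_eq_half_s13 (hq : Measurable q) (ha : a ≠ 0)
    (h₁ : μ {ω | q ω = a} = 1 / 2) (h₂ : μ {ω | q ω = -a} = 1 / 2) :
    ∫ ω, q ω ∂μ = 0 := by
  have hne : a ≠ -a := fun h => ha (by linarith)
  have hS₁ : MeasurableSet {ω | q ω = a} := hq (measurableSet_singleton a)
  have hS₂ : MeasurableSet {ω | q ω = -a} := hq (measurableSet_singleton (-a))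
  have hq_ae : q =ᵐ[μ] fun ω => {ω | q ω = a}.indicator (fun _ => a) ω
      + {ω | q ω = -a}.indicator (fun _ => -a) ω := by
    filter_upwards [ae_eq_or_eq_neg_of_measure_eq_half_s13 hq ha h₁ h₂] with ω hω
    rcases hω with h | h <;> simp [h, hne, hne.symm]
  rw [integral_congr_ae hq_ae, integral_add ((integrable_const a).indicator hS₁)
    ((integrable_const (-a)).indicator hS₂), integral_indicator_const _ hS₁,
    integral_indicator_const _ hS₂, measureReal_def, measureReal_def, h₁, h₂]
  simp

theorem integrable_of_measure_eq_half (hq : Measurable q) (ha : a ≠ 0)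
    (h₁ : μ {ω | q ω = a} = 1 / 2) (h₂ : μ {ω | q ω = -a} = 1 / 2) :
    Integrable q μ := by
  refine Integrable.of_bound hq.aestronglyMeasurable |a| ?_
  filter_upwards [ae_eq_or_eq_neg_of_measure_eq_half_s13 hq ha h₁ h₂] with ω hω
  rcases hω with h | h <;> simp [h]

end Rademacher

section SigmaUpTo

variable {Ω β : Type*} {mΩ : MeasurableSpace Ω} [mβ : MeasurableSpace β] {q : ℕ → Ω → β}

/-- `σ(q 1, …, q j)`; the indexing starts at `1`, so `sigmaUpTo q 0 = ⊥`. -/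
abbrev sigmaUpTo (q : ℕ → Ω → β) (j : ℕ) : MeasurableSpace Ω :=
  ⨆ i ∈ Finset.Icc 1 j, MeasurableSpace.comap (q i) mβ

theorem sigmaUpTo_le (hq : ∀ i, Measurable (q i)) (j : ℕ) : sigmaUpTo q j ≤ mΩ :=
  iSup₂_le fun i _ => (hq i).comap_le

theorem sigmaUpTo_mono : Monotone (sigmaUpTo q) := fun _ _ hij =>
  biSup_mono fun _ hi => Finset.mem_Icc.mpr
    ⟨(Finset.mem_Icc.mp hi).1, (Finset.mem_Icc.mp hi).2.trans hij⟩

theorem comap_le_sigmaUpTo {i j : ℕ} (hi : 1 ≤ i) (hij : i ≤ j) :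
    MeasurableSpace.comap (q i) mβ ≤ sigmaUpTo q j :=
  le_iSup₂ (f := fun i (_ : i ∈ Finset.Icc 1 j) => MeasurableSpace.comap (q i) mβ) i
    (Finset.mem_Icc.mpr ⟨hi, hij⟩)

theorem measurable_sigmaUpTo {k : ℕ} (hk : 1 ≤ k) : Measurable[sigmaUpTo q k] (q k) :=
  Measurable.of_comap_le (comap_le_sigmaUpTo hk le_rfl)

theorem indep_comap_sigmaUpTo_pred {μ : Measure Ω} (hq : ∀ i, Measurable (q i)) {n : ℕ}
    (hind : iIndepFun (fun i : Fin n => q ((i : ℕ) + 1)) μ) {k : ℕ} (hk : 1 ≤ k) (hkn : k ≤ n) :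
    Indep (MeasurableSpace.comap (q k) mβ) (sigmaUpTo q (k - 1)) μ := by
  let m : Fin n → MeasurableSpace Ω := fun i => MeasurableSpace.comap (q ((i : ℕ) + 1)) mβ
  let i₀ : Fin n := ⟨k - 1, by omega⟩
  have hdisj : Disjoint ({i₀} : Set (Fin n)) {i | (i : ℕ) + 1 < k} := by
    rw [Set.disjoint_singleton_left]
    simp [i₀]
    omega
  refine indep_of_indep_of_le_right (indep_of_indep_of_le_left
    (indep_iSup_of_disjoint (m := m) (fun i => (hq _).comap_le) hind hdisj) ?_) ?_
  · have hk' : k = (i₀ : ℕ) + 1 := by simp [i₀]; omega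
    rw [hk']
    exact le_iSup₂ (f := fun i (_ : i ∈ ({i₀} : Set (Fin n))) => m i) i₀ rfl
  · refine iSup₂_le fun i hi => ?_
    obtain ⟨hi1, hik⟩ := Finset.mem_Icc.mp hi
    let j : Fin n := ⟨i - 1, by omega⟩
    have hij : i = (j : ℕ) + 1 := by simp [j]; omega
    rw [hij]
    exact le_iSup₂ (f := fun i (_ : i ∈ {i : Fin n | (i : ℕ) + 1 < k}) => m i) j
      (by simp [j]; omega)

theorem measurable_sigmaUpTo_of_recursion {X : ℕ → Ω → ℝ} {g : ℝ → β → ℝ}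
    (hg : Measurable (Function.uncurry g)) {n : ℕ} {x₀ : ℝ} (hX₀ : ∀ ω, X 0 ω = x₀)
    (hrec : ∀ k, 1 ≤ k → k ≤ n → ∀ ω, X k ω = g (X (k - 1) ω) (q k ω)) :
    ∀ k ≤ n, Measurable[sigmaUpTo q k] (X k)
  | 0, _ => by
    rw [funext hX₀]
    exact measurable_const
  | k + 1, hk => by
    rw [funext (hrec (k + 1) k.succ_pos hk)]
    have hXk := (measurable_sigmaUpTo_of_recursion hg hX₀ hrec k (by omega)).mono
      (sigmaUpTo_mono k.le_succ) le_rfl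
    exact hg.comp (hXk.prodMk (measurable_sigmaUpTo k.succ_pos))

end SigmaUpTo

section CondExp

variable {Ω : Type*} {m mΩ : MeasurableSpace Ω} {μ : Measure Ω} [IsFiniteMeasure μ]

theorem condExp_add_mul_of_indep (hm : m ≤ mΩ) {f g Z : Ω → ℝ}
    (hf : StronglyMeasurable[m] f) (hfi : Integrable f μ) (hg : StronglyMeasurable[m] g)
    (hgZ : Integrable (g * Z) μ) (hZ : Measurable Z) (hZi : Integrable Z μ)
    (hind : Indep (MeasurableSpace.comap Z inferInstance) m μ) (hZ₀ : μ[Z] = 0) :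
    μ[f + g * Z | m] =ᵐ[μ] f := by
  have hZm : μ[Z | m] =ᵐ[μ] fun _ => 0 := by
    simpa [hZ₀] using condExp_indep_eq hZ.comap_le hm
      (Measurable.of_comap_le le_rfl).stronglyMeasurable hind
  filter_upwards [condExp_add hfi hgZ m, condExp_mul_of_stronglyMeasurable_left hg hgZ hZi, hZm]
    with ω hadd hmul hzero
  rw [hadd, Pi.add_apply, hmul, condExp_of_stronglyMeasurable hm hf hfi]
  simp [hzero]

theorem condExp_cirTruncStep_sub (hm : m ≤ mΩ) {b σ C h : ℝ} (hC : 0 ≤ C) {Y Z : Ω → ℝ}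
    (hY : Measurable[m] Y) (hY₀ : ∀ᵐ ω ∂μ, 0 ≤ Y ω) (hZ : Measurable Z) (hZi : Integrable Z μ)
    (hind : Indep (MeasurableSpace.comap Z inferInstance) m μ) (hZ₀ : μ[Z] = 0) :
    μ[fun ω => cirTruncStep b σ C h (Y ω) (Z ω) - Y ω | m]
      =ᵐ[μ] fun ω => (b - min (Y ω) C) * h := by
  set f : Ω → ℝ := fun ω => (b - min (Y ω) C) * h
  set g : Ω → ℝ := fun ω => σ * √(min (Y ω) C)
  have hf : Measurable[m] f := by fun_prop
  have hg : Measurable[m] g := by fun_prop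
  have hfi : Integrable f μ := by
    refine Integrable.of_bound (hf.mono hm le_rfl).aestronglyMeasurable ((|b| + C) * |h|) ?_
    filter_upwards [hY₀] with ω hω
    have hmin : |min (Y ω) C| ≤ C := by
      rw [abs_of_nonneg (le_min hω hC)]
      exact min_le_right _ _
    rw [Real.norm_eq_abs, abs_mul]
    gcongr
    exact (abs_sub _ _).trans (by gcongr)
  have hgZ : Integrable (g * Z) μ := by
    refine hZi.bdd_mul (c := |σ| * √C) (hg.mono hm le_rfl).aestronglyMeasurable
      (ae_of_all _ fun ω => ?_)
    rw [Real.norm_eq_abs, abs_mul, abs_of_nonneg (Real.sqrt_nonneg _)]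
    gcongr
    exact min_le_right _ _
  have hsplit : (fun ω => cirTruncStep b σ C h (Y ω) (Z ω) - Y ω) = f + g * Z := by
    ext ω
    simp only [cirTruncStep, Pi.add_apply, Pi.mul_apply, f, g]
    ring
  rw [hsplit]
  exact condExp_add_mul_of_indep hm hf.stronglyMeasurable hfi hg.stronglyMeasurable hgZ hZ hZi
    hind hZ₀

end CondExp

theorem ae_sum_le_card_mul {Ω ι : Type*} {mΩ : MeasurableSpace Ω} {μ : Measure Ω}
    {s : Finset ι} {f : ι → Ω → ℝ} {c : ℝ} (h : ∀ i ∈ s, ∀ᵐ ω ∂μ, f i ω ≤ c) :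
    ∀ᵐ ω ∂μ, ∑ i ∈ s, f i ω ≤ s.card * c := by
  filter_upwards [(Filter.eventually_all_finset s).2 h] with ω hω
  simpa using Finset.sum_le_card_nsmul s (f · ω) c hω

structure IsCIRTruncScheme {Ω : Type*} [MeasurableSpace Ω] (μ : Measure Ω)
    (b σ C h x₀ : ℝ) (n : ℕ) (q X : ℕ → Ω → ℝ) : Prop where
  measurable : ∀ k, Measurable (q k)
  indep : iIndepFun (fun i : Fin n => q ((i : ℕ) + 1)) μ
  dist : ∀ k, 1 ≤ k → k ≤ n →
    μ {ω | q k ω = √h} = 1 / 2 ∧ μ {ω | q k ω = -√h} = 1 / 2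
  init : ∀ ω, X 0 ω = x₀
  step : ∀ k, 1 ≤ k → k ≤ n → ∀ ω, X k ω = cirTruncStep b σ C h (X (k - 1) ω) (q k ω)

namespace IsCIRTruncScheme

variable {Ω : Type*} {mΩ : MeasurableSpace Ω} {μ : Measure Ω}
  {b σ C h x₀ : ℝ} {n : ℕ} {q X : ℕ → Ω → ℝ}

theorem ae_abs_le_sqrt [IsProbabilityMeasure μ] (hX : IsCIRTruncScheme μ b σ C h x₀ n q X)
    (hh : 0 < h) :
    ∀ᵐ ω ∂μ, ∀ k, 1 ≤ k → k ≤ n → |q k ω| ≤ √h := by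
  refine ae_all_iff.2 fun k => Filter.eventually_imp_distrib_left.2 fun hk =>
    Filter.eventually_imp_distrib_left.2 fun hkn => ?_
  obtain ⟨h₁, h₂⟩ := hX.dist k hk hkn
  filter_upwards [ae_eq_or_eq_neg_of_measure_eq_half_s13 (hX.measurable k)
    (Real.sqrt_pos.2 hh).ne' h₁ h₂] with ω hω
  rcases hω with hω | hω <;> simp [hω, abs_of_nonneg (Real.sqrt_nonneg h)]

theorem ae_nonneg [IsProbabilityMeasure μ] (hX : IsCIRTruncScheme μ b σ C h x₀ n q X)
    (hσ : 0 ≤ σ) (hσb : σ ^ 2 ≤ 2 * b) (hC : 0 ≤ C) (hh : 0 < h) (hh2 : h ≤ 1 / 2)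
    (hx₀ : 0 ≤ x₀) :
    ∀ᵐ ω ∂μ, ∀ k ≤ n, 0 ≤ X k ω := by
  filter_upwards [hX.ae_abs_le_sqrt hh] with ω hω
  exact cirTruncStep_iterate_nonneg hσ hσb hC hh.le hh2 (x := (X · ω)) ((hX.init ω).symm ▸ hx₀)
    (fun k hk hkn => hX.step k hk hkn ω) fun k hk hkn => neg_le_of_abs_le (hω k hk hkn)

theorem measurable_sigmaUpTo (hX : IsCIRTruncScheme μ b σ C h x₀ n q X) :
    ∀ k ≤ n, Measurable[sigmaUpTo q k] (X k) :=
  measurable_sigmaUpTo_of_recursion (measurable_uncurry_cirTruncStep b σ C h) hX.init hX.step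

theorem condExp_increment_ae_eq [IsProbabilityMeasure μ]
    (hX : IsCIRTruncScheme μ b σ C h x₀ n q X) (hσ : 0 ≤ σ) (hσb : σ ^ 2 ≤ 2 * b) (hC : 0 ≤ C)
    (hh : 0 < h) (hh2 : h ≤ 1 / 2) (hx₀ : 0 ≤ x₀) {k : ℕ} (hk : 1 ≤ k) (hkn : k ≤ n) :
    μ[fun ω => X k ω - X (k - 1) ω | sigmaUpTo q (k - 1)]
      =ᵐ[μ] fun ω => (b - min (X (k - 1) ω) C) * h := by
  obtain ⟨h₁, h₂⟩ := hX.dist k hk hkn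
  have hne : √h ≠ 0 := (Real.sqrt_pos.2 hh).ne'
  rw [funext (hX.step k hk hkn)]
  refine condExp_cirTruncStep_sub (sigmaUpTo_le hX.measurable _) hC
    (hX.measurable_sigmaUpTo _ (by omega)) ?_ (hX.measurable k)
    (integrable_of_measure_eq_half (hX.measurable k) hne h₁ h₂)
    (indep_comap_sigmaUpTo_pred hX.measurable hX.indep hk hkn)
    (integral_eq_zero_of_measure_eq_half_s13 (hX.measurable k) hne h₁ h₂)
  filter_upwards [hX.ae_nonneg hσ hσb hC hh hh2 hx₀] with ω hω
  exact hω _ (by omega)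

theorem ae_abs_condExp_increment_le [IsProbabilityMeasure μ]
    (hX : IsCIRTruncScheme μ b σ C h x₀ n q X) (hσ : 0 ≤ σ) (hσb : σ ^ 2 ≤ 2 * b) (hC : 0 ≤ C)
    (hh : 0 < h) (hh2 : h ≤ 1 / 2) (hx₀ : 0 ≤ x₀) {k : ℕ} (hk : 1 ≤ k) (hkn : k ≤ n) :
    ∀ᵐ ω ∂μ, |μ[fun ω => X k ω - X (k - 1) ω | sigmaUpTo q (k - 1)] ω| ≤ (b + C) * h := by
  have hb : 0 ≤ b := by linarith [sq_nonneg σ]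
  filter_upwards [hX.condExp_increment_ae_eq hσ hσb hC hh hh2 hx₀ hk hkn,
    hX.ae_nonneg hσ hσb hC hh hh2 hx₀] with ω hω hXω
  rw [hω, abs_mul, abs_of_pos hh]
  exact mul_le_mul_of_nonneg_right (abs_sub_min_le hb (hXω _ (by omega)) hC) hh.le

theorem ae_condExp_sq_increment_le [IsProbabilityMeasure μ]
    (hX : IsCIRTruncScheme μ b σ C h x₀ n q X) (hσ : 0 ≤ σ) (hσb : σ ^ 2 ≤ 2 * b) (hC : 0 ≤ C)
    (hh : 0 < h) (hh2 : h ≤ 1 / 2) (hx₀ : 0 ≤ x₀) {k : ℕ} (hk : 1 ≤ k) (hkn : k ≤ n) :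
    ∀ᵐ ω ∂μ, μ[fun ω => (X k ω - X (k - 1) ω) ^ 2 | sigmaUpTo q (k - 1)] ω
      ≤ ((b + C) * h + σ * √h * √C) ^ 2 := by
  have hb : 0 ≤ b := by linarith [sq_nonneg σ]
  refine (ae_bdd_abs_condExp_of_ae_bdd_abs ?_).mono fun ω hω => (le_abs_self _).trans hω
  filter_upwards [hX.ae_nonneg hσ hσb hC hh hh2 hx₀, hX.ae_abs_le_sqrt hh] with ω hXω hqω
  rw [abs_of_nonneg (sq_nonneg _), ← sq_abs, hX.step k hk hkn ω]
  exact pow_le_pow_left₀ (abs_nonneg _)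
    (abs_cirTruncStep_sub_le hb hσ hC hh.le (hXω _ (by omega)) (hqω k hk hkn)) 2

end IsCIRTruncScheme

theorem truncated_cir_condexp_sums_bounded_general {Ω : Type*} [MeasurableSpace Ω]
    (μ : Measure Ω) [IsProbabilityMeasure μ]
    (b σ T x₀ C : ℝ) (n : ℕ)
    (hσ : 0 < σ) (hσ2 : σ ^ 2 ≤ 2 * b)
    (hT : 0 < T) (hx₀ : 0 < x₀) (hC : 0 < C) (hnT : 2 * T < (n : ℝ))
    (q : ℕ → Ω → ℝ) (hmeas : ∀ k, Measurable (q k))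
    (hindep : iIndepFun (m := fun _ : Fin n => Real.measurableSpace) (fun i => q (i + 1)) μ)
    (hdist : ∀ k, 1 ≤ k → k ≤ n →
      μ {ω | q k ω = Real.sqrt (T / n)} = 1 / 2 ∧
        μ {ω | q k ω = -Real.sqrt (T / n)} = 1 / 2)
    (X : ℕ → Ω → ℝ) (hX0 : ∀ ω, X 0 ω = x₀)
    (hXrec : ∀ k, 1 ≤ k → k ≤ n → ∀ ω,
      X k ω = X (k - 1) ω + (b - min (X (k - 1) ω) C) * T / n
        + σ * q k ω * Real.sqrt (min (X (k - 1) ω) C)) :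
    (∀ᵐ ω ∂μ,
      ∑ k ∈ Finset.Icc 1 n,
          (μ[fun ω' => (X k ω' - X (k - 1) ω') ^ 2
            | ⨆ i ∈ Finset.Icc 1 (k - 1),
                MeasurableSpace.comap (q i) Real.measurableSpace]) ω
        ≤ ((b + C) * T + σ * Real.sqrt (T * C)) ^ 2) ∧
    (∀ᵐ ω ∂μ,
      ∑ k ∈ Finset.Icc 1 n,
          |(μ[fun ω' => X k ω' - X (k - 1) ω'
            | ⨆ i ∈ Finset.Icc 1 (k - 1),
                MeasurableSpace.comap (q i) Real.measurableSpace]) ω|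
        ≤ (b + C) * T) := by
  have hn : (0 : ℝ) < n := by linarith
  have hh : 0 < T / n := div_pos hT hn
  have hh2 : T / n ≤ 1 / 2 := by rw [div_le_iff₀ hn]; linarith
  have hX : IsCIRTruncScheme μ b σ C (T / n) x₀ n q X :=
    { measurable := hmeas, indep := hindep, dist := hdist, init := hX0
      step := fun k hk hkn ω => by rw [hXrec k hk hkn ω, cirTruncStep, mul_div_assoc] }
  refine ⟨?_, ?_⟩
  · filter_upwards [ae_sum_le_card_mul fun k hk => hX.ae_condExp_sq_increment_le hσ.le hσ2
      hC.le hh hh2 hx₀.le (Finset.mem_Icc.1 hk).1 (Finset.mem_Icc.1 hk).2] with ω hω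
    calc _ ≤ ((Finset.Icc 1 n).card : ℝ) * ((b + C) * (T / n) + σ * √(T / n) * √C) ^ 2 := hω
      _ = n * ((b + C) * T / n + σ * √(T * C) / √n) ^ 2 := by
        rw [Nat.card_Icc, Nat.add_sub_cancel, Real.sqrt_div' _ hn.le, Real.sqrt_mul hT.le]
        ring
      _ ≤ _ := mul_sq_div_add_div_sqrt_le (Nat.one_le_cast.2 (Nat.cast_pos.1 hn))
        (mul_nonneg (by linarith [sq_nonneg σ]) hT.le) (by positivity)
  · filter_upwards [ae_sum_le_card_mul fun k hk => hX.ae_abs_condExp_increment_le hσ.le hσ2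
      hC.le hh hh2 hx₀.le (Finset.mem_Icc.1 hk).1 (Finset.mem_Icc.1 hk).2] with ω hω
    calc _ ≤ ((Finset.Icc 1 n).card : ℝ) * ((b + C) * (T / n)) := hω
      _ = (b + C) * T := by
        rw [Nat.card_Icc, Nat.add_sub_cancel]
        field_simp

/-- Uniform boundedness of the sums of conditional first and second moments
of the increments `Q_k = X_k − X_{k−1}` of the truncated Euler scheme: almost surely
`Σ_{k=1}^n E[Q_k² | F_{k−1}] ≤ ((b+C)T + σ√(TC))²` and
`Σ_{k=1}^n |E[Q_k | F_{k−1}]| ≤ (b+C)T`. -/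
theorem truncated_cir_condexp_sums_bounded {Ω : Type*} [MeasurableSpace Ω]
    (μ : Measure Ω) [IsProbabilityMeasure μ]
    (b σ T x₀ C : ℝ) (n : ℕ)
    (hb : 0 < b) (hσ : 0 < σ) (hσ2 : σ ^ 2 ≤ 2 * b)
    (hT : 0 < T) (hx₀ : 0 < x₀) (hC : 0 < C) (hn : 0 < n) (hnT : 2 * T < (n : ℝ))
    (q : ℕ → Ω → ℝ) (hmeas : ∀ k, Measurable (q k))
    (hindep : iIndepFun (m := fun _ : Fin n => Real.measurableSpace) (fun i => q (i + 1)) μ)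
    (hdist : ∀ k, 1 ≤ k → k ≤ n →
      μ {ω | q k ω = Real.sqrt (T / n)} = 1 / 2 ∧
        μ {ω | q k ω = -Real.sqrt (T / n)} = 1 / 2)
    (X : ℕ → Ω → ℝ) (hX0 : ∀ ω, X 0 ω = x₀)
    (hXrec : ∀ k, 1 ≤ k → k ≤ n → ∀ ω,
      X k ω = X (k - 1) ω + (b - min (X (k - 1) ω) C) * T / n
        + σ * q k ω * Real.sqrt (min (X (k - 1) ω) C)) :
    (∀ᵐ ω ∂μ,
      ∑ k ∈ Finset.Icc 1 n,
          (μ[fun ω' => (X k ω' - X (k - 1) ω') ^ 2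
            | ⨆ i ∈ Finset.Icc 1 (k - 1),
                MeasurableSpace.comap (q i) Real.measurableSpace]) ω
        ≤ ((b + C) * T + σ * Real.sqrt (T * C)) ^ 2) ∧
    (∀ᵐ ω ∂μ,
      ∑ k ∈ Finset.Icc 1 n,
          |(μ[fun ω' => X k ω' - X (k - 1) ω'
            | ⨆ i ∈ Finset.Icc 1 (k - 1),
                MeasurableSpace.comap (q i) Real.measurableSpace]) ω|
        ≤ (b + C) * T) :=
  truncated_cir_condexp_sums_bounded_general μ b σ T x₀ C n hσ hσ2 hT hx₀ hC hnT q hmeas hindep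
    hdist X hX0 hXrec
end

section
/- Let σ>0 and b>0 satisfy σ² ≤ 2b. Then the function y ↦ y^{−2b/σ²} · exp(2(y−1)/σ²) is not integrable on (0,1]; equivalently, lim_{x → 0+} ∫ₓ¹ y^{−2b/σ²} exp(2(y−1)/σ²) dy = +∞. In terms of the scale function V(x) = ∫₁ˣ y^{−2b/σ²} exp(2(y−1)/σ²) dy defined for 0 < x ≤ 1, this says lim_{x→0+} V(x) = −∞. -/
open MeasureTheory Filter

/-!
On `(0, 1]` the exponent `-2b/σ²` is at most `-1` and the exponential factor is at least
`exp (-2/σ²)`, so the integrand dominates `exp (-2/σ²) / y`. Since `∫ₓ¹ dy / y = log (1/x)`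
blows up as `x → 0+`, so does `∫ₓ¹` of the integrand.
-/

open Set Real Topology

lemma inv_le_rpow_of_le_neg_one {y p : ℝ} (hy : y ∈ Ioc 0 1) (hp : p ≤ -1) :
    y⁻¹ ≤ y ^ p := by
  simpa only [rpow_neg_one] using rpow_le_rpow_of_exponent_ge hy.1 hy.2 hp

section InvLowerBound

variable {f : ℝ → ℝ} {c : ℝ}

lemma not_integrableOn_Ioc_zero_one_of_mul_inv_le (hc : 0 < c)
    (hf : ∀ y ∈ Ioc (0 : ℝ) 1, c * y⁻¹ ≤ f y) : ¬ IntegrableOn f (Ioc 0 1) := by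
  intro hint
  have hcinv : IntegrableOn (fun y : ℝ => c * y⁻¹) (Ioc 0 1) := by
    refine hint.mono' (measurable_const.mul measurable_inv).aestronglyMeasurable ?_
    filter_upwards [ae_restrict_mem measurableSet_Ioc] with y hy
    rw [norm_of_nonneg (by have := hy.1; positivity)]
    exact hf y hy
  have hinv : IntervalIntegrable (fun y : ℝ => y⁻¹) volume 0 1 := by
    rw [intervalIntegrable_iff_integrableOn_Ioc_of_le zero_le_one]
    have hscaled := hcinv.const_mul c⁻¹
    simp only [← mul_assoc, inv_mul_cancel₀ hc.ne', one_mul] at hscaled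
    exact hscaled
  simp [intervalIntegrable_inv_iff] at hinv

lemma mul_log_inv_le_intervalIntegral (hf_int : LocallyIntegrableOn f (Ioi 0))
    (hf : ∀ y ∈ Ioc (0 : ℝ) 1, c * y⁻¹ ≤ f y) {x : ℝ} (hx : x ∈ Ioo 0 1) :
    c * log x⁻¹ ≤ ∫ y in x..1, f y := by
  have hsub : Icc x 1 ⊆ Ioi 0 := fun y hy => hx.1.trans_le hy.1
  have hf_x : IntervalIntegrable f volume x 1 :=
    (intervalIntegrable_iff_integrableOn_Icc_of_le hx.2.le).2
      (hf_int.integrableOn_compact_subset hsub isCompact_Icc)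
  have hinv_x : IntervalIntegrable (fun y : ℝ => c * y⁻¹) volume x 1 :=
    (continuousOn_const.mul (continuousOn_inv₀.mono fun y hy => (hsub hy).ne'))
      |>.intervalIntegrable_of_Icc hx.2.le
  calc c * log x⁻¹ = ∫ y in x..1, c * y⁻¹ := by
        rw [intervalIntegral.integral_const_mul, integral_inv_of_pos hx.1 one_pos, one_div]
    _ ≤ ∫ y in x..1, f y := intervalIntegral.integral_mono_on hx.2.le hinv_x hf_x
        fun y hy => hf y ⟨hx.1.trans_le hy.1, hy.2⟩

lemma tendsto_intervalIntegral_atTop_of_mul_inv_le (hc : 0 < c)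
    (hf_int : LocallyIntegrableOn f (Ioi 0)) (hf : ∀ y ∈ Ioc (0 : ℝ) 1, c * y⁻¹ ≤ f y) :
    Tendsto (fun x => ∫ y in x..1, f y) (𝓝[>] 0) atTop := by
  have hlog : Tendsto (fun x : ℝ => c * log x⁻¹) (𝓝[>] 0) atTop := by
    simp only [log_inv]
    exact (tendsto_neg_atBot_atTop.comp tendsto_log_nhdsGT_zero).const_mul_atTop hc
  refine tendsto_atTop_mono' _ ?_ hlog
  filter_upwards [Ioo_mem_nhdsGT one_pos] with x hx
  exact mul_log_inv_le_intervalIntegral hf_int hf hx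

end InvLowerBound

lemma exp_mul_inv_le_cir_scale_density {b σ : ℝ} (hσ : 0 < σ) (hσ2 : σ ^ 2 ≤ 2 * b) :
    ∀ y ∈ Ioc (0 : ℝ) 1,
      exp (-2 / σ ^ 2) * y⁻¹ ≤ y ^ (-(2 * b / σ ^ 2)) * exp (2 * (y - 1) / σ ^ 2) := by
  intro y hy
  have hσ2pos : 0 < σ ^ 2 := by positivity
  have hexponent : -(2 * b / σ ^ 2) ≤ -1 := by
    rw [neg_le_neg_iff, le_div_iff₀ hσ2pos]
    linarith
  have hexp : exp (-2 / σ ^ 2) ≤ exp (2 * (y - 1) / σ ^ 2) :=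
    exp_le_exp.2 (div_le_div_of_nonneg_right (by linarith [hy.1]) hσ2pos.le)
  rw [mul_comm]
  exact mul_le_mul (inv_le_rpow_of_le_neg_one hy hexponent) hexp (exp_pos _).le
    (rpow_nonneg hy.1.le _)

theorem cir_scale_function_diverges_at_zero_general (b σ : ℝ)
    (hσ : 0 < σ) (hσ2 : σ ^ 2 ≤ 2 * b) :
    ¬ IntegrableOn (fun y : ℝ => y ^ (-(2 * b / σ ^ 2)) * Real.exp (2 * (y - 1) / σ ^ 2))
        (Set.Ioc 0 1) ∧
    Tendsto (fun x : ℝ => ∫ y in x..1, y ^ (-(2 * b / σ ^ 2)) * Real.exp (2 * (y - 1) / σ ^ 2))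
      (nhdsWithin 0 (Set.Ioi 0)) atTop ∧
    Tendsto (fun x : ℝ => ∫ y in (1 : ℝ)..x, y ^ (-(2 * b / σ ^ 2)) * Real.exp (2 * (y - 1) / σ ^ 2))
      (nhdsWithin 0 (Set.Ioi 0)) atBot := by
  have hc : 0 < exp (-2 / σ ^ 2) := exp_pos _
  have hbound := exp_mul_inv_le_cir_scale_density hσ hσ2
  have hcont : ContinuousOn
      (fun y : ℝ => y ^ (-(2 * b / σ ^ 2)) * exp (2 * (y - 1) / σ ^ 2)) (Ioi 0) :=
    (continuousOn_id.rpow_const fun y hy => .inl (ne_of_gt hy)).mul (by fun_prop)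
  have hlim := tendsto_intervalIntegral_atTop_of_mul_inv_le hc
    (hcont.locallyIntegrableOn measurableSet_Ioi) hbound
  refine ⟨not_integrableOn_Ioc_zero_one_of_mul_inv_le hc hbound, hlim, ?_⟩
  exact (tendsto_neg_atTop_atBot.comp hlim).congr fun x =>
    (intervalIntegral.integral_symm x 1).symm

/-- For `σ² ≤ 2b`, the scale-function integrand
`y ↦ y^{−2b/σ²} exp(2(y−1)/σ²)` of the CIR diffusion is not integrable on `(0,1]`;
equivalently `∫ₓ¹ → +∞` as `x → 0+`, i.e. the scale function
`V(x) = ∫₁ˣ y^{−2b/σ²} exp(2(y−1)/σ²) dy` tends to `−∞` as `x → 0+`. -/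
theorem cir_scale_function_diverges_at_zero (b σ : ℝ)
    (hb : 0 < b) (hσ : 0 < σ) (hσ2 : σ ^ 2 ≤ 2 * b) :
    ¬ IntegrableOn (fun y : ℝ => y ^ (-(2 * b / σ ^ 2)) * Real.exp (2 * (y - 1) / σ ^ 2))
        (Set.Ioc 0 1) ∧
    Tendsto (fun x : ℝ => ∫ y in x..1, y ^ (-(2 * b / σ ^ 2)) * Real.exp (2 * (y - 1) / σ ^ 2))
      (nhdsWithin 0 (Set.Ioi 0)) atTop ∧
    Tendsto (fun x : ℝ => ∫ y in (1 : ℝ)..x, y ^ (-(2 * b / σ ^ 2)) * Real.exp (2 * (y - 1) / σ ^ 2))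
      (nhdsWithin 0 (Set.Ioi 0)) atBot :=
  cir_scale_function_diverges_at_zero_general b σ hσ hσ2
end

section
/- Let b>0, σ>0, and C > max(b, 1). For x > 0 define the scale function V(x) = ∫₁ˣ exp( −∫₁ʸ 2(b − min(z,C)) / (σ² · min(z,C)) dz ) dy, and set C₁ = ∫₁ᶜ exp(2(y−1)/σ²) · y^{−2b/σ²} dy. Then for every x > C, V(x) = C₁ + C^{1 − 2b/σ²} · (σ²/(2(C−b))) · exp(2(C−1)/σ²) · ( exp( 2(C−b)(x−C)/(σ²C) ) − 1 ), and consequently lim_{x → +∞} V(x) = +∞. -/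
/-! On `[1, C]` the truncation is inactive and `∫₁ʸ 2f/g² = (2b/σ²) log y − 2(y − 1)/σ²`,
which gives `V'(y) = exp (2(y − 1)/σ²) y^(−2b/σ²)` there. Beyond `C` the coefficients are frozen
at their values at `C`, so the exponent is affine and `V'(y) = V'(C) exp (k (y − C))` with
`k = 2(C − b)/(σ²C)`; integrating gives the formula, and `V → ∞` because `C > b` makes `k > 0`. -/

open MeasureTheory Filter Set Real intervalIntegral
open scoped Interval

namespace TruncatedCIR

variable (b σ C : ℝ)

/-- `2f/g²` for the drift `f(z) = b − z ∧ C` and diffusion coefficient `g(z) = σ√(z ∧ C)`. -/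
noncomputable def driftRatio (z : ℝ) : ℝ := 2 * (b - min z C) / (σ ^ 2 * min z C)

noncomputable def scaleExponent (y : ℝ) : ℝ := ∫ z in (1 : ℝ)..y, driftRatio b σ C z

noncomputable def scaleDensity (y : ℝ) : ℝ := exp (-scaleExponent b σ C y)

noncomputable def scale (x : ℝ) : ℝ := ∫ y in (1 : ℝ)..x, scaleDensity b σ C y

variable {b σ C}

theorem driftRatio_of_le {z : ℝ} (hz : z ≤ C) (hz0 : z ≠ 0) :
    driftRatio b σ C z = 2 * b / σ ^ 2 * z⁻¹ - 2 / σ ^ 2 := by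
  rw [driftRatio, min_eq_left hz]
  field_simp

theorem driftRatio_of_ge {z : ℝ} (hz : C ≤ z) :
    driftRatio b σ C z = 2 * (b - C) / (σ ^ 2 * C) := by
  rw [driftRatio, min_eq_right hz]

theorem continuousOn_driftRatio (hσ : σ ≠ 0) (hC : 0 < C) :
    ContinuousOn (driftRatio b σ C) (Ioi 0) := by
  refine ContinuousOn.div (by fun_prop) (by fun_prop) fun z hz => ?_
  have : 0 < min z C := lt_min hz hC
  positivity

theorem intervalIntegrable_driftRatio (hσ : σ ≠ 0) (hC : 0 < C) {y : ℝ} (hy : 0 < y) :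
    IntervalIntegrable (driftRatio b σ C) volume 1 y :=
  ((continuousOn_driftRatio hσ hC).mono fun _ hz =>
    lt_of_lt_of_le (lt_min one_pos hy) hz.1).intervalIntegrable

theorem scaleExponent_of_le {y : ℝ} (hy : 1 ≤ y) (hyC : y ≤ C) :
    scaleExponent b σ C y = 2 * b / σ ^ 2 * log y - 2 * (y - 1) / σ ^ 2 := by
  have hpos : ∀ z ∈ [[(1 : ℝ), y]], 0 < z := fun z hz =>
    one_pos.trans_le (uIcc_of_le hy ▸ hz).1
  have hinv : IntervalIntegrable (fun z : ℝ => z⁻¹) volume 1 y :=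
    intervalIntegrable_inv (fun z hz => (hpos z hz).ne') continuousOn_id
  rw [scaleExponent, integral_congr fun z hz =>
      driftRatio_of_le ((uIcc_of_le hy ▸ hz).2.trans hyC) (hpos z hz).ne',
    integral_sub (hinv.const_mul _) intervalIntegrable_const,
    intervalIntegral.integral_const_mul, integral_inv_of_pos one_pos (one_pos.trans_le hy),
    intervalIntegral.integral_const, div_one, smul_eq_mul]
  ring

theorem scaleExponent_of_ge (hσ : σ ≠ 0) (hC : 1 ≤ C) {y : ℝ} (hy : C ≤ y) :
    scaleExponent b σ C y = scaleExponent b σ C C + 2 * (b - C) / (σ ^ 2 * C) * (y - C) := by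
  have hC0 : 0 < C := one_pos.trans_le hC
  rw [scaleExponent, scaleExponent,
    ← integral_add_adjacent_intervals (intervalIntegrable_driftRatio hσ hC0 hC0)
      ((intervalIntegrable_driftRatio hσ hC0 hC0).symm.trans
        (intervalIntegrable_driftRatio hσ hC0 (hC0.trans_le hy))),
    integral_congr (a := C) fun z hz => driftRatio_of_ge (uIcc_of_le hy ▸ hz).1,
    intervalIntegral.integral_const, smul_eq_mul, mul_comm]

theorem scaleDensity_of_le {y : ℝ} (hy : 1 ≤ y) (hyC : y ≤ C) :
    scaleDensity b σ C y = exp (2 * (y - 1) / σ ^ 2) * y ^ (-(2 * b / σ ^ 2)) := by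
  rw [scaleDensity, scaleExponent_of_le hy hyC, rpow_def_of_pos (one_pos.trans_le hy),
    ← exp_add]
  ring_nf

theorem scaleDensity_of_ge (hσ : σ ≠ 0) (hC : 1 ≤ C) {y : ℝ} (hy : C ≤ y) :
    scaleDensity b σ C y =
      scaleDensity b σ C C * exp (2 * (C - b) / (σ ^ 2 * C) * (y - C)) := by
  rw [scaleDensity, scaleDensity, scaleExponent_of_ge hσ hC hy, ← exp_add]
  ring_nf

theorem continuousOn_scaleDensity (hσ : σ ≠ 0) (hC : 0 < C) {x : ℝ} (hx : 0 < x) :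
    ContinuousOn (scaleDensity b σ C) [[1, x]] :=
  (continuousOn_primitive_interval' (intervalIntegrable_driftRatio hσ hC hx)
    left_mem_uIcc).neg.rexp

theorem integral_exp_mul_sub {k : ℝ} (hk : k ≠ 0) (a x : ℝ) :
    ∫ y in a..x, exp (k * (y - a)) = (exp (k * (x - a)) - 1) / k := by
  simp only [mul_sub]
  rw [integral_comp_mul_sub exp hk, integral_exp, sub_self, exp_zero, smul_eq_mul,
    inv_mul_eq_div]

theorem scale_of_ge (hσ : σ ≠ 0) (hC : 1 ≤ C) (hbC : b ≠ C) {x : ℝ} (hx : C ≤ x) :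
    scale b σ C x = scale b σ C C + scaleDensity b σ C C * (σ ^ 2 * C / (2 * (C - b)))
      * (exp (2 * (C - b) / (σ ^ 2 * C) * (x - C)) - 1) := by
  have hC0 : 0 < C := one_pos.trans_le hC
  have hk : 2 * (C - b) / (σ ^ 2 * C) ≠ 0 := by
    have : C - b ≠ 0 := sub_ne_zero.2 hbC.symm
    positivity
  rw [scale, scale, ← integral_add_adjacent_intervals
      ((continuousOn_scaleDensity hσ hC0 hC0).intervalIntegrable)
      ((continuousOn_scaleDensity hσ hC0 hC0).intervalIntegrable.symm.trans
        (continuousOn_scaleDensity hσ hC0 (hC0.trans_le hx)).intervalIntegrable),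
    integral_congr (a := C) fun y hy => scaleDensity_of_ge hσ hC (uIcc_of_le hx ▸ hy).1,
    intervalIntegral.integral_const_mul, integral_exp_mul_sub hk]
  field_simp

theorem tendsto_scale_atTop (hσ : σ ≠ 0) (hC : 1 ≤ C) (hbC : b < C) :
    Tendsto (scale b σ C) atTop atTop := by
  have hCb : 0 < C - b := sub_pos.2 hbC
  have hC0 : 0 < C := one_pos.trans_le hC
  have hexp : Tendsto (fun x => exp (2 * (C - b) / (σ ^ 2 * C) * (x - C))) atTop atTop :=
    tendsto_exp_atTop.comp <| (tendsto_atTop_add_const_right _ (-C) tendsto_id).const_mul_atTop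
      (by positivity)
  have hA : 0 < scaleDensity b σ C C * (σ ^ 2 * C / (2 * (C - b))) :=
    mul_pos (exp_pos _) (by positivity)
  refine (tendsto_atTop_add_const_left _ (scale b σ C C) <|
    (tendsto_atTop_add_const_right _ (-1) hexp).const_mul_atTop hA).congr' ?_
  filter_upwards [eventually_ge_atTop C] with x hx
  rw [scale_of_ge hσ hC hbC.ne hx]
  ring

end TruncatedCIR

open TruncatedCIR in
theorem truncated_cir_scale_function_formula_general (b σ C : ℝ)
    (hσ : 0 < σ) (hC : max b 1 < C) :
    (∀ x : ℝ, C < x →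
      (∫ y in (1 : ℝ)..x,
          Real.exp (-(∫ z in (1 : ℝ)..y, 2 * (b - min z C) / (σ ^ 2 * min z C))))
        = (∫ y in (1 : ℝ)..C, Real.exp (2 * (y - 1) / σ ^ 2) * y ^ (-(2 * b / σ ^ 2)))
          + C ^ (1 - 2 * b / σ ^ 2) * (σ ^ 2 / (2 * (C - b))) * Real.exp (2 * (C - 1) / σ ^ 2)
            * (Real.exp (2 * (C - b) * (x - C) / (σ ^ 2 * C)) - 1)) ∧
    Tendsto (fun x : ℝ =>
        ∫ y in (1 : ℝ)..x,
          Real.exp (-(∫ z in (1 : ℝ)..y, 2 * (b - min z C) / (σ ^ 2 * min z C))))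
      atTop atTop := by
  obtain ⟨hbC, hC1⟩ := max_lt_iff.1 hC
  change (∀ x, C < x → scale b σ C x = _) ∧ Tendsto (scale b σ C) atTop atTop
  refine ⟨fun x hx => ?_, tendsto_scale_atTop hσ.ne' hC1.le hbC⟩
  have hC0 : 0 < C := one_pos.trans hC1
  have hrpow : C ^ (1 - 2 * b / σ ^ 2) = C * C ^ (-(2 * b / σ ^ 2)) := by
    rw [sub_eq_add_neg (1 : ℝ), rpow_add hC0, rpow_one]
  rw [scale_of_ge hσ.ne' hC1.le hbC.ne hx.le, scale,
    integral_congr fun y hy =>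
      scaleDensity_of_le (uIcc_of_le hC1.le ▸ hy).1 (uIcc_of_le hC1.le ▸ hy).2,
    scaleDensity_of_le hC1.le le_rfl, hrpow]
  have hCb : C - b ≠ 0 := sub_ne_zero.2 hbC.ne'
  field_simp

/-- Explicit form of the scale function
`V(x) = ∫₁ˣ exp(−∫₁ʸ 2(b − min(z,C))/(σ² min(z,C)) dz) dy` of the truncated CIR diffusion
for `x > C` (with `C > max(b,1)` and `C₁ = ∫₁ᶜ exp(2(y−1)/σ²) y^{−2b/σ²} dy`), and its
divergence `V(x) → +∞` as `x → +∞`. -/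
theorem truncated_cir_scale_function_formula (b σ C : ℝ)
    (hb : 0 < b) (hσ : 0 < σ) (hC : max b 1 < C) :
    (∀ x : ℝ, C < x →
      (∫ y in (1 : ℝ)..x,
          Real.exp (-(∫ z in (1 : ℝ)..y, 2 * (b - min z C) / (σ ^ 2 * min z C))))
        = (∫ y in (1 : ℝ)..C, Real.exp (2 * (y - 1) / σ ^ 2) * y ^ (-(2 * b / σ ^ 2)))
          + C ^ (1 - 2 * b / σ ^ 2) * (σ ^ 2 / (2 * (C - b))) * Real.exp (2 * (C - 1) / σ ^ 2)
            * (Real.exp (2 * (C - b) * (x - C) / (σ ^ 2 * C)) - 1)) ∧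
    Tendsto (fun x : ℝ =>
        ∫ y in (1 : ℝ)..x,
          Real.exp (-(∫ z in (1 : ℝ)..y, 2 * (b - min z C) / (σ ^ 2 * min z C))))
      atTop atTop :=
  truncated_cir_scale_function_formula_general b σ C hσ hC
end
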